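/- arXiv:2412.18400 — 3 statements merged into one kernel-verified Lean document; each statement's English description precedes it below -/
import Mathlib

section
/- For n ≥ 2 and a weight W, the pseudometric d_W satisfies the identity of indiscernibles (i.e., d_W(π,φ) = 0 implies π = φ for all π, φ ∈ S_n), and hence is a metric, if and only if w_{i,j} > 0 for all 1 ≤ i < j ≤ n. -/
open Finset

/-- The set of index pairs `(i,j)` with `i < j`. -/
def pairs (n : ℕ) : Finset (Fin n × Fin n) :=
  Finset.univ.filter (fun p => p.1 < p.2)

/-- The discordance set of two permutations: all pairs `i < j` with
`(π_j - π_i)(φ_j - φ_i) < 0`. -/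
def dsc (n : ℕ) (π φ : Equiv.Perm (Fin n)) : Finset (Fin n × Fin n) :=
  (pairs n).filter (fun p =>
    ((π p.2 : ℤ) - (π p.1 : ℤ)) * ((φ p.2 : ℤ) - (φ p.1 : ℤ)) < 0)

/-- `W` is a weight: a strictly upper triangular matrix of nonnegative reals
with positive total sum. -/
def IsWeight (n : ℕ) (W : Fin n → Fin n → ℝ) : Prop :=
  (∀ i j : Fin n, ¬ i < j → W i j = 0) ∧ (∀ i j : Fin n, 0 ≤ W i j) ∧
    0 < ∑ p ∈ pairs n, W p.1 p.2

/-- The weighted Kendall tau distance. -/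
noncomputable def dW (n : ℕ) (W : Fin n → Fin n → ℝ) (π φ : Equiv.Perm (Fin n)) : ℝ :=
  (∑ p ∈ dsc n π φ, W p.1 p.2) / (∑ p ∈ pairs n, W p.1 p.2)

/-! A pair of permutations is at distance zero iff all its discordant pairs carry weight zero.
If every weight is positive, such permutations have no discordant pair, so `φ ∘ π⁻¹` is strictly
monotone on `Fin n`, hence the identity. Conversely, if `w_{i,j} = 0`, choose `π` sending `i, j` to
adjacent values; composing `π` with the transposition of these two values gives a different
permutation whose only discordant pair with `π` is `(i, j)`. -/

theorem Equiv.swap_lt_swap_iff_of_covBy {α : Type*} [LinearOrder α] [DecidableEq α]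
    {a b u v : α} (hab : a ⋖ b) (huv : u < v) :
    swap a b v < swap a b u ↔ u = a ∧ v = b := by
  have hgap : ∀ c, a < c → b ≤ c := fun c hc => not_lt.1 (hab.2 hc)
  have hlt := hab.lt
  rw [swap_apply_def, swap_apply_def]
  split_ifs <;> grind

section Discordance

variable {n : ℕ}

theorem mem_dsc_iff {π φ : Equiv.Perm (Fin n)} {p : Fin n × Fin n} :
    p ∈ dsc n π φ ↔ p.1 < p.2 ∧ (π p.1 < π p.2 ↔ φ p.2 < φ p.1) := by
  simp only [dsc, pairs, mem_filter, mem_univ, true_and, and_congr_right_iff]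
  intro hp
  have hπ : π p.1 ≠ π p.2 := π.injective.ne hp.ne
  have hφ : φ p.1 ≠ φ p.2 := φ.injective.ne hp.ne
  rw [mul_neg_iff, sub_pos, sub_neg, sub_pos, sub_neg]
  norm_cast
  grind

theorem eq_of_dsc_eq_empty {π φ : Equiv.Perm (Fin n)} (h : dsc n π φ = ∅) : π = φ := by
  have hord : ∀ x y, π x < π y → φ x < φ y := by
    intro x y hxy
    have hne : x ≠ y := fun h => hxy.ne (congrArg π h)
    have hφ := φ.injective.ne hne
    have hnot_xy := mem_dsc_iff.not.1 (h ▸ notMem_empty (x, y))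
    have hnot_yx := mem_dsc_iff.not.1 (h ▸ notMem_empty (y, x))
    grind
  have hmono : StrictMono (π.symm.trans φ) := fun u v huv =>
    hord _ _ (by simpa using huv)
  ext x
  simpa using congrArg Fin.val (hmono.apply_eq (x := π x)).symm

theorem dsc_trans_swap_of_covBy {π : Equiv.Perm (Fin n)} {i j : Fin n} (hij : i < j)
    (hcov : π i ⋖ π j) : dsc n π (π.trans (Equiv.swap (π i) (π j))) = {(i, j)} := by
  ext ⟨x, y⟩
  simp only [mem_dsc_iff, mem_singleton, Prod.mk.injEq, Equiv.trans_apply]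
  rcases lt_trichotomy (π x) (π y) with hlt | heq | hgt
  · rw [Equiv.swap_lt_swap_iff_of_covBy hcov hlt, π.injective.eq_iff, π.injective.eq_iff]
    grind
  · obtain rfl := π.injective heq
    simp only [lt_irrefl, false_and, false_iff]
    rintro ⟨rfl, rfl⟩
    exact hij.false
  · have hrev := Equiv.swap_lt_swap_iff_of_covBy hcov hgt
    rw [π.injective.eq_iff, π.injective.eq_iff] at hrev
    have hπij := hcov.lt
    grind

theorem exists_ne_dsc_eq_singleton {i j : Fin n} (hij : i < j) :
    ∃ π φ : Equiv.Perm (Fin n), π ≠ φ ∧ dsc n π φ = {(i, j)} := by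
  obtain ⟨c, hic, -⟩ := exists_covBy_le_of_lt hij
  let π := Equiv.swap j c
  have hcov : π i ⋖ π j := by
    rwa [Equiv.swap_apply_of_ne_of_ne hij.ne hic.lt.ne, Equiv.swap_apply_left]
  refine ⟨π, π.trans (Equiv.swap (π i) (π j)), fun h => ?_, dsc_trans_swap_of_covBy hij hcov⟩
  have hfix := congrArg (· i) h
  simp only [Equiv.trans_apply, Equiv.swap_apply_left] at hfix
  exact π.injective.ne hij.ne hfix

theorem dW_eq_zero_iff {W : Fin n → Fin n → ℝ} (hW : IsWeight n W) {π φ : Equiv.Perm (Fin n)} :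
    dW n W π φ = 0 ↔ ∀ p ∈ dsc n π φ, W p.1 p.2 = 0 := by
  rw [dW, div_eq_zero_iff, or_iff_left hW.2.2.ne', sum_eq_zero_iff_of_nonneg fun p _ => hW.2.1 _ _]

end Discordance

theorem dW_metric_iff_general (n : ℕ) (W : Fin n → Fin n → ℝ)
    (hW : IsWeight n W) :
    (∀ π φ : Equiv.Perm (Fin n), dW n W π φ = 0 → π = φ) ↔
      (∀ i j : Fin n, i < j → 0 < W i j) := by
  constructor
  · intro hmet i j hij
    refine (hW.2.1 i j).lt_of_ne fun hzero => ?_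
    obtain ⟨π, φ, hne, hdsc⟩ := exists_ne_dsc_eq_singleton hij
    exact hne (hmet π φ ((dW_eq_zero_iff hW).2 (by simp [hdsc, hzero])))
  · intro hpos π φ hzero
    refine eq_of_dsc_eq_empty (eq_empty_of_forall_notMem fun p hp => ?_)
    exact (hpos _ _ (mem_dsc_iff.1 hp).1).ne' ((dW_eq_zero_iff hW).1 hzero p hp)

/-- For `n ≥ 2` and a weight `W`, the pseudometric `d_W` satisfies the
identity of indiscernibles (hence is a metric) iff all weights `w_{i,j}`,
`i < j`, are positive. -/
theorem dW_metric_iff (n : ℕ) (hn : 2 ≤ n) (W : Fin n → Fin n → ℝ)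
    (hW : IsWeight n W) :
    (∀ π φ : Equiv.Perm (Fin n), dW n W π φ = 0 → π = φ) ↔
      (∀ i j : Fin n, i < j → 0 < W i j) :=
  dW_metric_iff_general n W hW
end

section
/- Let π ≠ φ be vertices of G_n, n ≥ 2, and let ψ ∈ S_n. Then dsc(π,ψ) ∩ dsc(ψ,φ) = ∅ if and only if ψ lies on some shortest path between π and φ in G_n, i.e., if and only if d_{G_n}(π,ψ) + d_{G_n}(ψ,φ) = d_{G_n}(π,φ). -/
open Finset

lemma dsc_comm (n : ℕ) (π φ : Equiv.Perm (Fin n)) : dsc n π φ = dsc n φ π := by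
  ext p
  simp only [dsc, Finset.mem_filter]
  rw [mul_comm]

/-- The edge graph of the permutohedron of order `n`: two permutations are
adjacent iff their discordance set is a singleton. -/
def Gn (n : ℕ) : SimpleGraph (Equiv.Perm (Fin n)) where
  Adj π φ := (dsc n π φ).card = 1
  symm := by
    constructor
    intro π φ h
    rwa [dsc_comm]
  loopless := by
    constructor
    intro π h
    have he : dsc n π π = ∅ := by
      ext p
      simp only [dsc, Finset.mem_filter, Finset.notMem_empty, iff_false, not_and]
      intro _
      exact not_lt.mpr (mul_self_nonneg _)
    rw [he] at h
    simp at h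

/-!
A pair of positions is discordant for `π, φ` iff it is discordant for exactly one of `π, ψ` and
`ψ, φ`, so `|dsc(π,φ)| + 2 |dsc(π,ψ) ∩ dsc(ψ,φ)| = |dsc(π,ψ)| + |dsc(ψ,φ)|`. It therefore suffices
that `d_{G_n}(π,φ) = |dsc(π,φ)|`. Along an edge `|dsc|` changes by exactly one, which gives `≥`.
For `≤`: if `π ≠ φ`, some consecutive values `a, a+1` of `π` sit at positions that `φ` orders the
other way round (else `φ ∘ π⁻¹` is increasing), and swapping them in `π` is an edge that removes
exactly that pair from `dsc(π,φ)`.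
-/

open scoped symmDiff

theorem Finset.card_symmDiff_add_two_mul_card_inter {α : Type*} [DecidableEq α]
    (s t : Finset α) : #(s ∆ t) + 2 * #(s ∩ t) = #s + #t := by
  rw [symmDiff_eq_sup_sdiff_inf, sup_eq_union, inf_eq_inter,
    card_sdiff_of_subset inter_subset_union]
  have := card_union_add_card_inter s t
  have := card_le_card (inter_subset_union (s := s) (t := t))
  omega

variable {n : ℕ}

lemma mem_dsc {π φ : Equiv.Perm (Fin n)} {p : Fin n × Fin n} :
    p ∈ dsc n π φ ↔ p.1 < p.2 ∧
      ((π p.2 : ℤ) - (π p.1 : ℤ)) * ((φ p.2 : ℤ) - (φ p.1 : ℤ)) < 0 := by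
  simp [dsc, pairs]

lemma dsc_self (π : Equiv.Perm (Fin n)) : dsc n π π = ∅ := by
  ext p
  simpa [mem_dsc] using fun _ => mul_self_nonneg ((π p.2 : ℤ) - π p.1)

lemma dsc_eq_symmDiff (π ψ φ : Equiv.Perm (Fin n)) :
    dsc n π φ = dsc n π ψ ∆ dsc n ψ φ := by
  ext ⟨i, j⟩
  simp only [mem_symmDiff, mem_dsc]
  by_cases hij : i < j
  · have hne (σ : Equiv.Perm (Fin n)) : (σ i : ℕ) ≠ σ j :=
      Fin.val_injective.ne (σ.injective.ne hij.ne)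
    have := hne π; have := hne ψ; have := hne φ
    simp only [hij, true_and, mul_neg_iff]
    omega
  · simp [hij]

lemma card_dsc_add_two_mul_card_inter (π ψ φ : Equiv.Perm (Fin n)) :
    #(dsc n π φ) + 2 * #(dsc n π ψ ∩ dsc n ψ φ) = #(dsc n π ψ) + #(dsc n ψ φ) := by
  rw [dsc_eq_symmDiff π ψ φ, card_symmDiff_add_two_mul_card_inter]

lemma mem_dsc_swap_mul {a b : Fin n} (hab : (b : ℕ) = a + 1) (π : Equiv.Perm (Fin n))
    (p : Fin n × Fin n) :
    p ∈ dsc n π (Equiv.swap a b * π) ↔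
      p.1 < p.2 ∧ ((π p.1 = a ∧ π p.2 = b) ∨ (π p.1 = b ∧ π p.2 = a)) := by
  rw [mem_dsc]
  refine and_congr_right fun hp => ?_
  have hne : (π p.1 : ℕ) ≠ π p.2 := Fin.val_injective.ne (π.injective.ne hp.ne)
  simp only [Equiv.Perm.mul_apply, Equiv.swap_apply_def, Fin.ext_iff, mul_neg_iff]
  split_ifs <;> omega

lemma Gn_adj_swap_mul {a b : Fin n} (hab : (b : ℕ) = a + 1) (π : Equiv.Perm (Fin n)) :
    (Gn n).Adj π (Equiv.swap a b * π) := by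
  show #(dsc n π (Equiv.swap a b * π)) = 1
  refine le_antisymm (card_le_one.2 fun p hp q hq => ?_) (card_pos.2 ?_)
  · rw [mem_dsc_swap_mul hab] at hp hq
    simp only [← Equiv.eq_symm_apply] at hp hq
    obtain ⟨hp, ⟨hp1, hp2⟩ | ⟨hp1, hp2⟩⟩ := hp <;>
      obtain ⟨hq, ⟨hq1, hq2⟩ | ⟨hq1, hq2⟩⟩ := hq <;>
      exact Prod.ext (by order) (by order)
  · have hne : π.symm a ≠ π.symm b := π.symm.injective.ne (by omega)
    rcases hne.lt_or_gt with h | h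
    · exact ⟨(π.symm a, π.symm b), (mem_dsc_swap_mul hab π _).2 ⟨h, by simp⟩⟩
    · exact ⟨(π.symm b, π.symm a), (mem_dsc_swap_mul hab π _).2 ⟨h, by simp⟩⟩

lemma exists_consecutive_discordant {π φ : Equiv.Perm (Fin n)} (h : π ≠ φ) :
    ∃ a b : Fin n, (b : ℕ) = a + 1 ∧ φ (π.symm b) < φ (π.symm a) := by
  obtain _ | m := n
  · exact absurd (Subsingleton.elim π φ) h
  by_contra! hmono
  have hσ : StrictMono (φ * π⁻¹) := Fin.strictMono_iff_lt_succ.2 fun i =>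
    (hmono i.castSucc i.succ (by simp)).lt_of_ne ((φ * π⁻¹).injective.ne i.castSucc_lt_succ.ne)
  refine h (Equiv.ext fun x => ?_)
  simpa using (hσ.apply_eq (x := π x)).symm

lemma exists_Gn_adj_card_dsc_succ {π φ : Equiv.Perm (Fin n)} (h : π ≠ φ) :
    ∃ ψ, (Gn n).Adj π ψ ∧ #(dsc n ψ φ) + 1 = #(dsc n π φ) := by
  obtain ⟨a, b, hab, hφ⟩ := exists_consecutive_discordant h
  refine ⟨Equiv.swap a b * π, Gn_adj_swap_mul hab π, ?_⟩
  have hsub : dsc n π (Equiv.swap a b * π) ⊆ dsc n π φ := by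
    intro p hp
    rw [mem_dsc_swap_mul hab] at hp
    obtain ⟨hp, ⟨hp1, hp2⟩ | ⟨hp1, hp2⟩⟩ := hp
    all_goals
      rw [← Equiv.eq_symm_apply] at hp1 hp2
      refine mem_dsc.2 ⟨hp, ?_⟩
      rw [hp1, hp2]
      simp only [Equiv.apply_symm_apply, mul_neg_iff]
      omega
  have key := card_dsc_add_two_mul_card_inter (Equiv.swap a b * π) π φ
  rw [dsc_comm n (Equiv.swap a b * π) π, inter_eq_left.2 hsub, Gn_adj_swap_mul hab π] at key
  omega

lemma exists_Gn_walk_length_eq_card_dsc (π φ : Equiv.Perm (Fin n)) :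
    ∃ w : (Gn n).Walk π φ, w.length = #(dsc n π φ) := by
  induction hm : #(dsc n π φ) using Nat.strong_induction_on generalizing π with
  | _ m ih =>
    by_cases h : π = φ
    · subst h
      exact ⟨.nil, by simp [← hm, dsc_self]⟩
    obtain ⟨ψ, hadj, hcard⟩ := exists_Gn_adj_card_dsc_succ h
    obtain ⟨w, hw⟩ := ih _ (by omega) ψ rfl
    exact ⟨.cons hadj w, by rw [SimpleGraph.Walk.length_cons, hw]; omega⟩

lemma card_dsc_le_length {π φ : Equiv.Perm (Fin n)} (w : (Gn n).Walk π φ) :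
    #(dsc n π φ) ≤ w.length := by
  induction w with
  | nil => simp [dsc_self]
  | @cons u v x hadj p ih =>
    have := card_dsc_add_two_mul_card_inter u v x
    rw [hadj] at this
    rw [SimpleGraph.Walk.length_cons]
    omega

lemma Gn_dist_eq_card_dsc (π φ : Equiv.Perm (Fin n)) :
    (Gn n).dist π φ = #(dsc n π φ) := by
  obtain ⟨w, hw⟩ := exists_Gn_walk_length_eq_card_dsc π φ
  obtain ⟨v, hv⟩ := SimpleGraph.Reachable.exists_walk_length_eq_dist ⟨w⟩
  exact le_antisymm (hw ▸ SimpleGraph.dist_le w) (hv ▸ card_dsc_le_length v)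

theorem dsc_inter_empty_iff_between_general (n : ℕ)
    (π φ ψ : Equiv.Perm (Fin n)) :
    dsc n π ψ ∩ dsc n ψ φ = ∅ ↔
      (Gn n).dist π ψ + (Gn n).dist ψ φ = (Gn n).dist π φ := by
  have := card_dsc_add_two_mul_card_inter π ψ φ
  rw [Gn_dist_eq_card_dsc, Gn_dist_eq_card_dsc, Gn_dist_eq_card_dsc, ← card_eq_zero]
  omega

/-- Let `π ≠ φ` be vertices of `G_n`, `n ≥ 2`, and let `ψ ∈ S_n`. Then
`dsc(π,ψ) ∩ dsc(ψ,φ) = ∅` iff `ψ` lies on some shortest path between `π`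
and `φ` in `G_n`, i.e. iff `d_{G_n}(π,ψ) + d_{G_n}(ψ,φ) = d_{G_n}(π,φ)`. -/
theorem dsc_inter_empty_iff_between (n : ℕ) (hn : 2 ≤ n)
    (π φ ψ : Equiv.Perm (Fin n)) (hne : π ≠ φ) :
    dsc n π ψ ∩ dsc n ψ φ = ∅ ↔
      (Gn n).dist π ψ + (Gn n).dist ψ φ = (Gn n).dist π φ :=
  dsc_inter_empty_iff_between_general n π φ ψ
end

section
/- Let n ≥ 3, let W be a weight with w_{i,j} > 0 for all 1 ≤ i < j ≤ n, and let π, φ ∈ S_n be distinct permutations with d_W(π,φ) < 1 (i.e., π and φ are nondiametrical, the diameter of (S_n,d_W) being 1). Then the set {π, φ, π̂, φ̂} forms a pseudolinear quadruple in (S_n,d_W); explicitly, d_W(π,φ) = d_W(π̂,φ̂) = s and d_W(φ,π̂) = d_W(φ̂,π) = t with s, t > 0, and d_W(π,π̂) = d_W(φ,φ̂) = s + t = 1. -/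
open Finset

/-- The ordinal inverse `π̂ = (n+1-π_1, …, n+1-π_n)` (in 0-indexed form,
`π̂ i = (n-1) - π i`). -/
def ordInv (n : ℕ) (π : Equiv.Perm (Fin n)) : Equiv.Perm (Fin n) :=
  π.trans Fin.revPerm

/-!
Reversal flips the sign of every difference `π j - π i`. Hence `π̂, φ̂` are discordant on exactly
the same pairs as `π, φ`, while `φ, π̂` are discordant exactly on the pairs where `π, φ` are
concordant, so `d_W(φ, π̂) = 1 - d_W(π, φ)` and `d_W(π, π̂) = 1`. Positivity of `d_W(π, φ)` comes
from the fact that permutations without a discordant pair induce an order automorphism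
`φ ∘ π⁻¹` of `Fin n`, which must be the identity.
-/

namespace KendallTau

variable {n : ℕ}

lemma mem_pairs {p : Fin n × Fin n} : p ∈ pairs n ↔ p.1 < p.2 := by
  simp [pairs]

lemma mem_dsc {π φ : Equiv.Perm (Fin n)} {p : Fin n × Fin n} :
    p ∈ dsc n π φ ↔
      p ∈ pairs n ∧ ((π p.2 : ℤ) - (π p.1 : ℤ)) * ((φ p.2 : ℤ) - (φ p.1 : ℤ)) < 0 :=
  Finset.mem_filter

lemma dsc_subset_pairs (π φ : Equiv.Perm (Fin n)) : dsc n π φ ⊆ pairs n :=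
  Finset.filter_subset _ _

lemma perm_sub_ne_zero (π : Equiv.Perm (Fin n)) {i j : Fin n} (h : i ≠ j) :
    (π j : ℤ) - (π i : ℤ) ≠ 0 := by
  rw [sub_ne_zero, Ne, Nat.cast_inj, Fin.val_inj, π.apply_eq_iff_eq]
  exact h.symm

lemma ordInv_sub (π : Equiv.Perm (Fin n)) (i j : Fin n) :
    (ordInv n π j : ℤ) - (ordInv n π i : ℤ) = -((π j : ℤ) - (π i : ℤ)) := by
  have hi := Fin.val_rev (π i)
  have hj := Fin.val_rev (π j)
  simp only [ordInv, Equiv.trans_apply, Fin.revPerm_apply]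
  omega

lemma dsc_comm (π φ : Equiv.Perm (Fin n)) : dsc n π φ = dsc n φ π := by
  ext p
  rw [mem_dsc, mem_dsc, mul_comm]

lemma dsc_self (π : Equiv.Perm (Fin n)) : dsc n π π = ∅ :=
  Finset.filter_false_of_mem fun _ _ => not_lt.2 (mul_self_nonneg _)

lemma dsc_ordInv_ordInv (π φ : Equiv.Perm (Fin n)) :
    dsc n (ordInv n π) (ordInv n φ) = dsc n π φ := by
  ext p
  rw [mem_dsc, mem_dsc, ordInv_sub, ordInv_sub, neg_mul_neg]

lemma dsc_ordInv_right (π φ : Equiv.Perm (Fin n)) :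
    dsc n φ (ordInv n π) = pairs n \ dsc n π φ := by
  ext p
  rw [Finset.mem_sdiff, mem_dsc, mem_dsc, ordInv_sub, mul_neg, neg_lt_zero]
  refine and_congr_right fun hp => ?_
  have hne := (mem_pairs.1 hp).ne
  rw [mul_comm, not_and, forall_prop_of_true hp, not_lt]
  exact ⟨le_of_lt, fun h =>
    h.lt_of_ne' (mul_ne_zero (perm_sub_ne_zero π hne) (perm_sub_ne_zero φ hne))⟩

lemma lt_iff_lt_of_notMem_dsc {π φ : Equiv.Perm (Fin n)} {i j : Fin n} (hij : i < j)
    (h : (i, j) ∉ dsc n π φ) : π i < π j ↔ φ i < φ j := by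
  have hprod : 0 < ((π j : ℤ) - (π i : ℤ)) * ((φ j : ℤ) - (φ i : ℤ)) :=
    (not_lt.1 fun hneg => h (mem_dsc.2 ⟨mem_pairs.2 hij, hneg⟩)).lt_of_ne'
      (mul_ne_zero (perm_sub_ne_zero π hij.ne) (perm_sub_ne_zero φ hij.ne))
  rw [Fin.lt_def, Fin.lt_def]
  rcases mul_pos_iff.1 hprod with ⟨hπ, hφ⟩ | ⟨hπ, hφ⟩ <;> omega

lemma lt_iff_lt_of_dsc_eq_empty {π φ : Equiv.Perm (Fin n)} (h : dsc n π φ = ∅) (i j : Fin n) :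
    π i < π j ↔ φ i < φ j := by
  have concordant {a b : Fin n} (hab : a < b) : π a < π b ↔ φ a < φ b :=
    lt_iff_lt_of_notMem_dsc hab (h ▸ Finset.notMem_empty _)
  rcases lt_trichotomy i j with hij | rfl | hij
  · exact concordant hij
  · simp
  · rw [← not_le, ← not_le, le_iff_lt_or_eq, le_iff_lt_or_eq, concordant hij,
      π.injective.eq_iff, φ.injective.eq_iff]

lemma eq_of_dsc_eq_empty {π φ : Equiv.Perm (Fin n)} (h : dsc n π φ = ∅) : π = φ := by
  let σ : Fin n ≃o Fin n :=
    { toEquiv := π.symm.trans φ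
      map_rel_iff' := fun {a b} => by
        simpa [not_lt] using (lt_iff_lt_of_dsc_eq_empty h (π.symm b) (π.symm a)).not.symm }
  ext x
  simpa [σ] using
    congrArg (fun f : Fin n ≃o Fin n => (f (π x) : ℕ)) (Subsingleton.elim (.refl _) σ)

variable (W : Fin n → Fin n → ℝ)

lemma dW_comm (π φ : Equiv.Perm (Fin n)) : dW n W π φ = dW n W φ π := by
  rw [dW, dW, dsc_comm]

lemma dW_ordInv_ordInv (π φ : Equiv.Perm (Fin n)) :
    dW n W (ordInv n π) (ordInv n φ) = dW n W π φ := by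
  rw [dW, dW, dsc_ordInv_ordInv]

variable {W}

lemma dW_ordInv_right (htot : ∑ p ∈ pairs n, W p.1 p.2 ≠ 0) (π φ : Equiv.Perm (Fin n)) :
    dW n W φ (ordInv n π) = 1 - dW n W π φ := by
  rw [dW, dW, dsc_ordInv_right, Finset.sum_sdiff_eq_sub (dsc_subset_pairs π φ), sub_div,
    div_self htot]

lemma dW_ordInv_self (htot : ∑ p ∈ pairs n, W p.1 p.2 ≠ 0) (π : Equiv.Perm (Fin n)) :
    dW n W π (ordInv n π) = 1 := by
  rw [dW_ordInv_right htot, dW, dsc_self, Finset.sum_empty, zero_div, sub_zero]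

lemma dW_pos (hpos : ∀ i j : Fin n, i < j → 0 < W i j) {π φ : Equiv.Perm (Fin n)}
    (hne : π ≠ φ) : 0 < dW n W π φ := by
  have hnonempty : (dsc n π φ).Nonempty :=
    Finset.nonempty_iff_ne_empty.2 fun h => hne (eq_of_dsc_eq_empty h)
  have hW : ∀ p ∈ pairs n, 0 < W p.1 p.2 := fun p hp => hpos _ _ (mem_pairs.1 hp)
  have hnum : 0 < ∑ p ∈ dsc n π φ, W p.1 p.2 :=
    Finset.sum_pos (fun p hp => hW p (dsc_subset_pairs π φ hp)) hnonempty
  exact div_pos hnum (hnum.trans_le (Finset.sum_le_sum_of_subset_of_nonneg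
    (dsc_subset_pairs π φ) fun p hp _ => (hW p hp).le))

end KendallTau

open KendallTau in
theorem ordInv_pseudolinear_quadruple_general (n : ℕ)
    (W : Fin n → Fin n → ℝ) (hW : IsWeight n W)
    (hpos : ∀ i j : Fin n, i < j → 0 < W i j)
    (π φ : Equiv.Perm (Fin n)) (hne : π ≠ φ) (hnd : dW n W π φ < 1) :
    ∃ s t : ℝ, 0 < s ∧ 0 < t ∧
      dW n W π φ = s ∧ dW n W (ordInv n π) (ordInv n φ) = s ∧
      dW n W φ (ordInv n π) = t ∧ dW n W (ordInv n φ) π = t ∧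
      dW n W π (ordInv n π) = s + t ∧ dW n W φ (ordInv n φ) = s + t ∧
      s + t = 1 := by
  have htot := hW.2.2.ne'
  refine ⟨dW n W π φ, 1 - dW n W π φ, dW_pos hpos hne, sub_pos.2 hnd, rfl,
    dW_ordInv_ordInv W π φ, dW_ordInv_right htot π φ, ?_, ?_, ?_, add_sub_cancel _ _⟩
  · rw [dW_comm, dW_ordInv_right htot, dW_comm]
  · rw [dW_ordInv_self htot, add_sub_cancel]
  · rw [dW_ordInv_self htot, add_sub_cancel]

/-- Let `n ≥ 3`, let `W` be a weight with positive entries above the diagonal,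
and let `π ≠ φ` be nondiametrical points of `(S_n, d_W)` (i.e. `d_W(π,φ) < 1`,
the diameter being `1`). Then `{π, φ, π̂, φ̂}` forms a pseudolinear quadruple:
`d_W(π,φ) = d_W(π̂,φ̂) = s`, `d_W(φ,π̂) = d_W(φ̂,π) = t` with `s, t > 0`, and
`d_W(π,π̂) = d_W(φ,φ̂) = s + t = 1`. -/
theorem ordInv_pseudolinear_quadruple (n : ℕ) (hn : 3 ≤ n)
    (W : Fin n → Fin n → ℝ) (hW : IsWeight n W)
    (hpos : ∀ i j : Fin n, i < j → 0 < W i j)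
    (π φ : Equiv.Perm (Fin n)) (hne : π ≠ φ) (hnd : dW n W π φ < 1) :
    ∃ s t : ℝ, 0 < s ∧ 0 < t ∧
      dW n W π φ = s ∧ dW n W (ordInv n π) (ordInv n φ) = s ∧
      dW n W φ (ordInv n π) = t ∧ dW n W (ordInv n φ) π = t ∧
      dW n W π (ordInv n π) = s + t ∧ dW n W φ (ordInv n φ) = s + t ∧
      s + t = 1 :=
  ordInv_pseudolinear_quadruple_general n W hW hpos π φ hne hnd
end
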